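/- arXiv:2602.04691 — 2 statements merged into one kernel-verified Lean document; each statement's English description precedes it below -/
import Mathlib

section
/- Consider a sequence of fixed-design clustered linear models indexed by G, constants M, C > 0, and positive reals h_g such that tr((X_gᵀX_g/N_g)⁻¹) ≤ M and λ_max(Ω_g) ≤ C · h_g for all g ≤ G. Then E‖β̂_G − β‖² ≤ (M·C/G²) Σ_{g=1}^G h_g/N_g. In particular: under semi-strong dependence (h_g = h(N_g) with h(N)/N → 0) the estimator is L²-consistent at rate (1/G²)Σ h(N_g)/N_g, and under weak dependence (h_g ≡ 1, i.e. λ_max(Ω_g) ≤ C) one gets E‖β̂_G − β‖² ≤ (M·C/G²) Σ_{g=1}^G 1/N_g. -/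
open MeasureTheory ProbabilityTheory Matrix

/-!
Writing `A_g = (X_gᵀX_g)⁻¹X_gᵀ`, the error is `β̂_G - β = G⁻¹ ∑_g A_g ε_g`. Coordinatewise, the
`A_g ε_g` are independent across clusters and centred, so the cross terms vanish and
`E‖β̂_G - β‖² = G⁻² ∑_g tr(A_g Ω_g A_gᵀ)`. By the Rayleigh bound each summand is at most
`λ_max(Ω_g) tr(A_g A_gᵀ) = λ_max(Ω_g) tr((X_gᵀX_g)⁻¹) ≤ C h_g · M / N_g`.
-/

/-- Largest eigenvalue of a real symmetric matrix via the Rayleigh quotient. -/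
noncomputable def lamMax {n : ℕ} (S : Matrix (Fin n) (Fin n) ℝ) : ℝ :=
  ⨆ v : {v : Fin n → ℝ // ∑ i, v i ^ 2 = 1}, v.1 ⬝ᵥ S.mulVec v.1

section Rayleigh

variable {n : ℕ}

lemma bddAbove_range_dotProduct_mulVec (S : Matrix (Fin n) (Fin n) ℝ) :
    BddAbove (Set.range fun v : {v : Fin n → ℝ // ∑ i, v i ^ 2 = 1} => v.1 ⬝ᵥ S *ᵥ v.1) := by
  refine ⟨∑ j, ∑ l, |S j l|, ?_⟩
  rintro _ ⟨⟨v, hv⟩, rfl⟩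
  have hv_le : ∀ j, |v j| ≤ 1 := fun j => (sq_le_one_iff_abs_le_one _).mp <|
    hv ▸ Finset.single_le_sum (fun i _ => sq_nonneg (v i)) (Finset.mem_univ j)
  calc v ⬝ᵥ S *ᵥ v = ∑ j, ∑ l, v j * (S j l * v l) := by
        simp only [dotProduct, mulVec, Finset.mul_sum]
    _ ≤ ∑ j, ∑ l, |S j l| := by
        refine Finset.sum_le_sum fun j _ => Finset.sum_le_sum fun l _ => ?_
        calc v j * (S j l * v l) ≤ |v j| * (|S j l| * |v l|) := by
              simpa only [abs_mul] using le_abs_self (v j * (S j l * v l))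
          _ ≤ 1 * (|S j l| * 1) := by gcongr <;> exact hv_le _
          _ = |S j l| := by ring

lemma dotProduct_mulVec_le_lamMax_mul (S : Matrix (Fin n) (Fin n) ℝ) (w : Fin n → ℝ) :
    w ⬝ᵥ S *ᵥ w ≤ lamMax S * ∑ j, w j ^ 2 := by
  set s := ∑ j, w j ^ 2
  obtain hs | hs := (Finset.sum_nonneg fun j _ => sq_nonneg (w j) : 0 ≤ s).eq_or_lt
  · have hw : w = 0 := funext fun j =>
      pow_eq_zero_iff two_ne_zero |>.mp <|
        (Finset.sum_eq_zero_iff_of_nonneg fun i _ => sq_nonneg (w i)).mp hs.symm j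
          (Finset.mem_univ j)
    subst hw
    simp [s]
  set v := (Real.sqrt s)⁻¹ • w
  have hsqrt : (Real.sqrt s)⁻¹ ^ 2 = s⁻¹ := by
    rw [inv_pow, Real.sq_sqrt hs.le]
  have hv : ∑ i, v i ^ 2 = 1 := by
    simp only [v, Pi.smul_apply, smul_eq_mul, mul_pow, ← Finset.mul_sum, hsqrt]
    exact inv_mul_cancel₀ hs.ne'
  have hle : v ⬝ᵥ S *ᵥ v ≤ lamMax S :=
    le_ciSup (bddAbove_range_dotProduct_mulVec S) ⟨v, hv⟩
  rw [smul_dotProduct, mulVec_smul, dotProduct_smul, smul_eq_mul, smul_eq_mul, ← mul_assoc,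
    ← sq, hsqrt, inv_mul_le_iff₀ hs] at hle
  linarith

lemma sum_dotProduct_mulVec_le_lamMax_mul_trace {k : Type*} [Fintype k]
    (S : Matrix (Fin n) (Fin n) ℝ) (A : Matrix k (Fin n) ℝ) :
    ∑ i, A i ⬝ᵥ S *ᵥ A i ≤ lamMax S * trace (A * Aᵀ) := by
  calc ∑ i, A i ⬝ᵥ S *ᵥ A i ≤ ∑ i, lamMax S * ∑ j, A i j ^ 2 :=
        Finset.sum_le_sum fun i _ => dotProduct_mulVec_le_lamMax_mul S (A i)
    _ = lamMax S * trace (A * Aᵀ) := by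
        simp [← Finset.mul_sum, trace, mul_apply, sq]

end Rayleigh

section OLS

variable {R m k : Type*} [CommRing R] [Fintype m] [Fintype k] [DecidableEq k]

noncomputable def olsMatrix (X : Matrix m k R) : Matrix k m R := (Xᵀ * X)⁻¹ * Xᵀ

variable {X : Matrix m k R}

lemma inv_mulVec_transpose_mulVec_add (hX : IsUnit (Xᵀ * X).det) (β : k → R) (e : m → R) :
    (Xᵀ * X)⁻¹ *ᵥ (Xᵀ *ᵥ (X *ᵥ β + e)) = β + olsMatrix X *ᵥ e := by
  rw [mulVec_add, mulVec_add, mulVec_mulVec, mulVec_mulVec, mulVec_mulVec, Matrix.mul_assoc,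
    nonsing_inv_mul _ hX, one_mulVec, olsMatrix]

lemma olsMatrix_mul_transpose (hX : IsUnit (Xᵀ * X).det) :
    olsMatrix X * (olsMatrix X)ᵀ = (Xᵀ * X)⁻¹ := by
  have hsymm : (Xᵀ * X)ᵀ = Xᵀ * X := by rw [transpose_mul, transpose_transpose]
  rw [olsMatrix, transpose_mul, transpose_transpose, transpose_nonsing_inv, hsymm,
    Matrix.mul_assoc, ← Matrix.mul_assoc Xᵀ, mul_nonsing_inv _ hX, Matrix.mul_one]

lemma inv_smul_sum_inv_mulVec_transpose_mulVec_add_sub {G : ℕ} (hG : G ≠ 0) {k : Type*}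
    [Fintype k] [DecidableEq k] {m : Fin G → Type*} [∀ g, Fintype (m g)]
    {X : (g : Fin G) → Matrix (m g) k ℝ} (hX : ∀ g, IsUnit ((X g)ᵀ * X g).det) (β : k → ℝ)
    (e : (g : Fin G) → m g → ℝ) :
    (G : ℝ)⁻¹ • ∑ g, ((X g)ᵀ * X g)⁻¹ *ᵥ ((X g)ᵀ *ᵥ (X g *ᵥ β + e g)) - β =
      (G : ℝ)⁻¹ • ∑ g, olsMatrix (X g) *ᵥ e g := by
  rw [Finset.sum_congr rfl fun g _ => inv_mulVec_transpose_mulVec_add (hX g) β (e g),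
    Finset.sum_add_distrib, Finset.sum_const, Finset.card_univ, Fintype.card_fin,
    ← Nat.cast_smul_eq_nsmul ℝ, smul_add, smul_smul, inv_mul_cancel₀ (Nat.cast_ne_zero.mpr hG),
    one_smul, add_sub_cancel_left]

end OLS

lemma trace_inv_smul {K n : Type*} [Field K] [Fintype n] [DecidableEq n] {c : K} (hc : c ≠ 0)
    {S : Matrix n n K} (hS : IsUnit S.det) :
    trace ((c • S)⁻¹) = c⁻¹ * trace S⁻¹ := by
  have : Invertible c := invertibleOfNonzero hc
  rw [Matrix.inv_smul (A := S) c hS, invOf_eq_inv, trace_smul, smul_eq_mul]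

lemma sum_olsMatrix_dotProduct_mulVec_le {n k : ℕ} (hn : 1 ≤ n) {X : Matrix (Fin n) (Fin k) ℝ}
    (hX : IsUnit (Xᵀ * X).det) (S : Matrix (Fin n) (Fin n) ℝ) {M c : ℝ} (hc : 0 ≤ c)
    (hTr : trace (((n : ℝ)⁻¹ • (Xᵀ * X))⁻¹) ≤ M) (hS : lamMax S ≤ c) :
    ∑ i, olsMatrix X i ⬝ᵥ S *ᵥ olsMatrix X i ≤ c * (M / n) := by
  have hn' : (0 : ℝ) < n := by exact_mod_cast hn
  rw [trace_inv_smul (inv_ne_zero hn'.ne') hX, inv_inv, ← le_div_iff₀' hn'] at hTr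
  have htr_nonneg : 0 ≤ trace (Xᵀ * X)⁻¹ := by
    rw [← olsMatrix_mul_transpose hX]
    simpa [trace, mul_apply, ← sq] using Finset.sum_nonneg fun i _ =>
      Finset.sum_nonneg fun j _ => sq_nonneg (olsMatrix X i j)
  calc ∑ i, olsMatrix X i ⬝ᵥ S *ᵥ olsMatrix X i ≤ lamMax S * trace (Xᵀ * X)⁻¹ := by
        simpa only [olsMatrix_mul_transpose hX] using
          sum_dotProduct_mulVec_le_lamMax_mul_trace S (olsMatrix X)
    _ ≤ c * (M / n) := mul_le_mul hS hTr htr_nonneg hc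

section SecondMoment

variable {Ω : Type*} [MeasurableSpace Ω] {μ : Measure Ω}

noncomputable def secondMomentMatrix {n : Type*} (μ : Measure Ω) (e : Ω → n → ℝ) :
    Matrix n n ℝ :=
  Matrix.of fun j l => ∫ ω, e ω j * e ω l ∂μ

section RandomVector

variable {n : Type*} [Fintype n] {e : Ω → n → ℝ}

lemma memLp_dotProduct (he : ∀ j, MemLp (fun ω => e ω j) 2 μ) (a : n → ℝ) :
    MemLp (fun ω => a ⬝ᵥ e ω) 2 μ :=
  memLp_finsetSum _ fun j _ => (he j).const_mul (a j)

lemma integral_dotProduct_eq_zero (he : ∀ j, Integrable (fun ω => e ω j) μ)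
    (hmean : ∀ j, ∫ ω, e ω j ∂μ = 0) (a : n → ℝ) :
    ∫ ω, a ⬝ᵥ e ω ∂μ = 0 := by
  simp only [dotProduct]
  rw [integral_finsetSum _ fun j _ => (he j).const_mul (a j)]
  simp [integral_const_mul, hmean]

lemma integral_dotProduct_sq (he : ∀ j, MemLp (fun ω => e ω j) 2 μ) (a : n → ℝ) :
    ∫ ω, (a ⬝ᵥ e ω) ^ 2 ∂μ = a ⬝ᵥ secondMomentMatrix μ e *ᵥ a := by
  have hint : ∀ j l, Integrable (fun ω => a j * a l * (e ω j * e ω l)) μ := fun j l =>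
    ((he j).integrable_mul (he l)).const_mul _
  calc ∫ ω, (a ⬝ᵥ e ω) ^ 2 ∂μ = ∫ ω, ∑ j, ∑ l, a j * a l * (e ω j * e ω l) ∂μ := by
        simp only [sq, dotProduct, Finset.sum_mul_sum]
        congr with ω
        exact Finset.sum_congr rfl fun j _ => Finset.sum_congr rfl fun l _ => by ring
    _ = ∑ j, ∑ l, a j * a l * ∫ ω, e ω j * e ω l ∂μ := by
        rw [integral_finsetSum _ fun j _ => integrable_finsetSum _ fun l _ => hint j l]
        refine Finset.sum_congr rfl fun j _ => ?_
        rw [integral_finsetSum _ fun l _ => hint j l]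
        simp only [integral_const_mul]
    _ = a ⬝ᵥ secondMomentMatrix μ e *ᵥ a := by
        simp only [dotProduct, mulVec, secondMomentMatrix, of_apply, Finset.mul_sum]
        exact Finset.sum_congr rfl fun j _ => Finset.sum_congr rfl fun l _ => by ring

end RandomVector

lemma integral_sq_sum_of_pairwise_indepFun [IsFiniteMeasure μ] {ι : Type*} (s : Finset ι)
    {Y : ι → Ω → ℝ} (hL2 : ∀ g, MemLp (Y g) 2 μ) (hmean : ∀ g, ∫ ω, Y g ω ∂μ = 0)
    (hindep : Pairwise fun g g' => Y g ⟂ᵢ[μ] Y g') :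
    ∫ ω, (∑ g ∈ s, Y g ω) ^ 2 ∂μ = ∑ g ∈ s, ∫ ω, Y g ω ^ 2 ∂μ := by
  have hsum_mean : ∫ ω, (∑ g ∈ s, Y g) ω ∂μ = 0 := by
    simp only [Finset.sum_apply]
    rw [integral_finsetSum _ fun g _ => (hL2 g).integrable one_le_two]
    exact Finset.sum_eq_zero fun g _ => hmean g
  have hvar := IndepFun.variance_sum (s := s) (fun g _ => hL2 g) fun g _ g' _ hne => hindep hne
  rw [variance_of_integral_eq_zero (memLp_finsetSum' s fun g _ => hL2 g).aemeasurable
    hsum_mean] at hvar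
  simpa only [Finset.sum_apply, variance_of_integral_eq_zero (hL2 _).aemeasurable (hmean _)]
    using hvar

lemma integral_sum_sq_sum_mulVec_of_iIndepFun [IsFiniteMeasure μ] {ι m : Type*} [Fintype ι]
    [Fintype m] {n : ι → Type*} [∀ g, Fintype (n g)] {e : (g : ι) → Ω → n g → ℝ}
    (hindep : iIndepFun e μ) (hL2 : ∀ g j, MemLp (fun ω => e g ω j) 2 μ)
    (hmean : ∀ g j, ∫ ω, e g ω j ∂μ = 0) (A : (g : ι) → Matrix m (n g) ℝ) :
    ∫ ω, ∑ i, (∑ g, A g *ᵥ e g ω) i ^ 2 ∂μ =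
      ∑ g, ∑ i, A g i ⬝ᵥ secondMomentMatrix μ (e g) *ᵥ A g i := by
  have hrow_L2 : ∀ i g, MemLp (fun ω => A g i ⬝ᵥ e g ω) 2 μ := fun i g =>
    memLp_dotProduct (hL2 g) (A g i)
  have hrow_mean : ∀ i g, ∫ ω, A g i ⬝ᵥ e g ω ∂μ = 0 := fun i g =>
    integral_dotProduct_eq_zero (fun j => (hL2 g j).integrable one_le_two) (hmean g) (A g i)
  have hrow_indep : ∀ i, Pairwise fun g g' =>
      (fun ω => A g i ⬝ᵥ e g ω) ⟂ᵢ[μ] fun ω => A g' i ⬝ᵥ e g' ω := fun i g g' hne =>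
    (hindep.indepFun hne).comp (φ := fun v => A g i ⬝ᵥ v) (ψ := fun v => A g' i ⬝ᵥ v)
      (by fun_prop) (by fun_prop)
  simp only [Finset.sum_apply]
  change ∫ ω, ∑ i, (∑ g, A g i ⬝ᵥ e g ω) ^ 2 ∂μ = _
  rw [integral_finsetSum _ fun i _ => (memLp_finsetSum _ fun g _ => hrow_L2 i g).integrable_sq,
    Finset.sum_comm]
  refine Finset.sum_congr rfl fun i _ => ?_
  rw [integral_sq_sum_of_pairwise_indepFun _ (hrow_L2 i) (hrow_mean i) (hrow_indep i)]
  exact Finset.sum_congr rfl fun g _ => integral_dotProduct_sq (hL2 g) (A g i)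

end SecondMoment

theorem stmt5_general {Ωs : Type*} [MeasurableSpace Ωs] (μ : Measure Ωs) [IsProbabilityMeasure μ]
    (k : ℕ) (β : Fin k → ℝ)
    (N : (G : ℕ) → Fin G → ℕ) (hN : ∀ G g, 1 ≤ N G g)
    (X : (G : ℕ) → (g : Fin G) → Matrix (Fin (N G g)) (Fin k) ℝ)
    (hX : ∀ G g, IsUnit ((X G g)ᵀ * X G g).det)
    (ε : (G : ℕ) → (g : Fin G) → Ωs → (Fin (N G g) → ℝ))
    (hmeas : ∀ G g, Measurable (ε G g))
    (hL2 : ∀ G g i, Integrable (fun ω => (ε G g ω i) ^ 2) μ)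
    (hmean : ∀ G g i, ∫ ω, ε G g ω i ∂μ = 0)
    (hindep : ∀ G, iIndepFun (ε G) μ)
    (Ωm : (G : ℕ) → (g : Fin G) → Matrix (Fin (N G g)) (Fin (N G g)) ℝ)
    (hΩ : ∀ G g i j, Ωm G g i j = ∫ ω, ε G g ω i * ε G g ω j ∂μ)
    (M C : ℝ) (hC : 0 < C)
    (h : (G : ℕ) → Fin G → ℝ) (hh : ∀ G g, 0 < h G g)
    (hTr : ∀ G g, Matrix.trace ((((N G g : ℝ))⁻¹ • ((X G g)ᵀ * X G g))⁻¹) ≤ M)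
    (hEig : ∀ G g, lamMax (Ωm G g) ≤ C * h G g)
    (betaHat : (G : ℕ) → Ωs → (Fin k → ℝ))
    (hbetaHat : ∀ G ω, betaHat G ω =
      (G : ℝ)⁻¹ • ∑ g, (((X G g)ᵀ * X G g)⁻¹).mulVec
        ((X G g)ᵀ.mulVec ((X G g).mulVec β + ε G g ω))) :
    (∀ G : ℕ, 1 ≤ G →
      ∫ ω, ∑ i, (betaHat G ω i - β i) ^ 2 ∂μ ≤
        M * C / (G : ℝ) ^ 2 * ∑ g, h G g / (N G g : ℝ)) ∧
    ((∀ G g, h G g = 1) → ∀ G : ℕ, 1 ≤ G →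
      ∫ ω, ∑ i, (betaHat G ω i - β i) ^ 2 ∂μ ≤
        M * C / (G : ℝ) ^ 2 * ∑ g, ((N G g : ℝ))⁻¹) := by
  have hbound : ∀ G : ℕ, 1 ≤ G →
      ∫ ω, ∑ i, (betaHat G ω i - β i) ^ 2 ∂μ ≤
        M * C / (G : ℝ) ^ 2 * ∑ g, h G g / (N G g : ℝ) := by
    intro G hG
    set A := fun g => olsMatrix (X G g)
    have herror : ∀ ω, betaHat G ω - β = (G : ℝ)⁻¹ • ∑ g, A g *ᵥ ε G g ω := fun ω => by
      rw [hbetaHat]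
      exact inv_smul_sum_inv_mulVec_transpose_mulVec_add_sub (by omega) (hX G) β (ε G · ω)
    have hL2' : ∀ g j, MemLp (fun ω => ε G g ω j) 2 μ := fun g j =>
      (memLp_two_iff_integrable_sq
        ((measurable_pi_apply j).comp (hmeas G g)).aestronglyMeasurable).mpr (hL2 G g j)
    have hcov : ∀ g, Ωm G g = secondMomentMatrix μ (ε G g) := fun g => Matrix.ext (hΩ G g)
    calc ∫ ω, ∑ i, (betaHat G ω i - β i) ^ 2 ∂μ
        = ((G : ℝ) ^ 2)⁻¹ * ∫ ω, ∑ i, (∑ g, A g *ᵥ ε G g ω) i ^ 2 ∂μ := by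
          simp only [← integral_const_mul, Finset.mul_sum, ← Pi.sub_apply, herror,
            Pi.smul_apply, smul_eq_mul, mul_pow, inv_pow]
      _ = ((G : ℝ) ^ 2)⁻¹ * ∑ g, ∑ i, A g i ⬝ᵥ Ωm G g *ᵥ A g i := by
          rw [integral_sum_sq_sum_mulVec_of_iIndepFun (hindep G) hL2' (hmean G) A]
          simp only [hcov]
      _ ≤ ((G : ℝ) ^ 2)⁻¹ * ∑ g, C * h G g * (M / N G g) := by
          gcongr with g
          exact sum_olsMatrix_dotProduct_mulVec_le (hN G g) (hX G g) (Ωm G g)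
            (mul_nonneg hC.le (hh G g).le) (hTr G g) (hEig G g)
      _ = M * C / (G : ℝ) ^ 2 * ∑ g, h G g / (N G g : ℝ) := by
          rw [Finset.mul_sum, Finset.mul_sum]
          exact Finset.sum_congr rfl fun g _ => by ring
  refine ⟨hbound, fun h_one G hG => ?_⟩
  simpa only [h_one, one_div] using hbound G hG

/-- rate Corollary following the paper's Theorem 1:
semi-strong and weak dependence regimes.  Along a sequence of fixed-design
clustered linear models indexed by `G`, if `tr((X_gᵀX_g/N_g)⁻¹) ≤ M` and
`λ_max(Ω_g) ≤ C·h_g`, then `E‖β̂_G − β‖² ≤ (M·C/G²)·∑_g h_g/N_g` for every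
`G ≥ 1`.  In particular (weak dependence, `h_g ≡ 1`, i.e. `λ_max(Ω_g) ≤ C`) one
gets `E‖β̂_G − β‖² ≤ (M·C/G²)·∑_g 1/N_g`. -/
theorem stmt5 {Ωs : Type*} [MeasurableSpace Ωs] (μ : Measure Ωs) [IsProbabilityMeasure μ]
    (k : ℕ) (β : Fin k → ℝ)
    (N : (G : ℕ) → Fin G → ℕ) (hN : ∀ G g, 1 ≤ N G g)
    (X : (G : ℕ) → (g : Fin G) → Matrix (Fin (N G g)) (Fin k) ℝ)
    (hX : ∀ G g, IsUnit ((X G g)ᵀ * X G g).det)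
    (ε : (G : ℕ) → (g : Fin G) → Ωs → (Fin (N G g) → ℝ))
    (hmeas : ∀ G g, Measurable (ε G g))
    (hL2 : ∀ G g i, Integrable (fun ω => (ε G g ω i) ^ 2) μ)
    (hmean : ∀ G g i, ∫ ω, ε G g ω i ∂μ = 0)
    (hindep : ∀ G, iIndepFun (ε G) μ)
    (Ωm : (G : ℕ) → (g : Fin G) → Matrix (Fin (N G g)) (Fin (N G g)) ℝ)
    (hΩ : ∀ G g i j, Ωm G g i j = ∫ ω, ε G g ω i * ε G g ω j ∂μ)
    (M C : ℝ) (hM : 0 < M) (hC : 0 < C)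
    (h : (G : ℕ) → Fin G → ℝ) (hh : ∀ G g, 0 < h G g)
    (hTr : ∀ G g, Matrix.trace ((((N G g : ℝ))⁻¹ • ((X G g)ᵀ * X G g))⁻¹) ≤ M)
    (hEig : ∀ G g, lamMax (Ωm G g) ≤ C * h G g)
    (betaHat : (G : ℕ) → Ωs → (Fin k → ℝ))
    (hbetaHat : ∀ G ω, betaHat G ω =
      (G : ℝ)⁻¹ • ∑ g, (((X G g)ᵀ * X G g)⁻¹).mulVec
        ((X G g)ᵀ.mulVec ((X G g).mulVec β + ε G g ω))) :
    (∀ G : ℕ, 1 ≤ G →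
      ∫ ω, ∑ i, (betaHat G ω i - β i) ^ 2 ∂μ ≤
        M * C / (G : ℝ) ^ 2 * ∑ g, h G g / (N G g : ℝ)) ∧
    ((∀ G g, h G g = 1) → ∀ G : ℕ, 1 ≤ G →
      ∫ ω, ∑ i, (betaHat G ω i - β i) ^ 2 ∂μ ≤
        M * C / (G : ℝ) ^ 2 * ∑ g, ((N G g : ℝ))⁻¹) :=
  stmt5_general μ k β N hN X hX ε hmeas hL2 hmean hindep Ωm hΩ M C hC h hh hTr hEig betaHat hbetaHat
end

section
/- Intercept-only equicorrelated model: let 0 < b < a, let cluster g have design vector X_g = 𝟙 (the all-ones vector in ℝ^{N_g}), and let ε_1,…,ε_G be mutually independent mean-zero random vectors with Cov(ε_g) = Ω_g = (a − b) I_{N_g} + b 𝟙𝟙ᵀ. For Y_g = β 𝟙 + ε_g, the cluster-average estimator β̂ = (1/G) Σ_g (𝟙ᵀ𝟙)⁻¹ 𝟙ᵀY_g has variance Var(β̂) = (a − b)/G² · Σ_{g=1}^G 1/N_g + b/G, and the pooled OLS estimator β̂_POLS = (Σ_g 𝟙ᵀY_g)/(Σ_g N_g) has variance Var(β̂_POLS)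 = (a − b)/(Σ_{g=1}^G N_g) + b · (Σ_{g=1}^G N_g²)/(Σ_{g=1}^G N_g)². -/
/-!
Both estimators are `β` plus a fixed linear combination `∑_g w_g S_g` of the cluster error
sums `S_g = 𝟙ᵀε_g`, with `w_g = 1/(G N_g)` for the cluster average and `w_g = 1/∑_h N_h` for
pooled OLS. The `S_g` are independent, and `Var S_g = 𝟙ᵀΩ_g𝟙 = (a - b) N_g + b N_g²`, so each
variance is `∑_g w_g² ((a - b) N_g + b N_g²)`, which simplifies to the stated formulas.
-/

open MeasureTheory ProbabilityTheory Finset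

lemma Fin.sum_const_add (n : ℕ) (β : ℝ) (x : Fin n → ℝ) :
    ∑ i, (β + x i) = n * β + ∑ i, x i := by
  simp only [Finset.sum_add_distrib, Fin.sum_const, nsmul_eq_mul]

lemma sum_sum_equicorrelated {ι : Type*} [Fintype ι] [DecidableEq ι] (a b : ℝ) :
    ∑ i : ι, ∑ j : ι, (if i = j then a else b)
      = (a - b) * Fintype.card ι + b * (Fintype.card ι : ℝ) ^ 2 := by
  have hsplit : ∀ i j : ι, (if i = j then a else b) = (if i = j then a - b else 0) + b := by
    intro i j
    split_ifs <;> ring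
  simp only [hsplit, sum_add_distrib, sum_ite_eq, mem_univ, if_true, sum_const, card_univ,
    nsmul_eq_mul]
  ring

section Estimators

variable {G : ℕ} {N : Fin G → ℕ} (β : ℝ) (x : (g : Fin G) → Fin (N g) → ℝ)

lemma clusterAverage_eq (hG : G ≠ 0) (hN : ∀ g, N g ≠ 0) :
    (G : ℝ)⁻¹ * ∑ g, (∑ i, (β + x g i)) / (N g : ℝ)
      = β + ∑ g, ((G : ℝ)⁻¹ * (N g : ℝ)⁻¹) * ∑ i, x g i := by
  have hsummand : ∀ g, (∑ i, (β + x g i)) / (N g : ℝ) = β + (N g : ℝ)⁻¹ * ∑ i, x g i := by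
    intro g
    rw [Fin.sum_const_add]
    field_simp [hN g]
  rw [sum_congr rfl fun g _ ↦ hsummand g, sum_add_distrib, sum_const, card_univ,
    Fintype.card_fin, nsmul_eq_mul, mul_add, inv_mul_cancel_left₀ (Nat.cast_ne_zero.2 hG), mul_sum]
  simp only [mul_assoc]

lemma pooledOLS_eq (hM : ∑ g, (N g : ℝ) ≠ 0) :
    (∑ g, ∑ i, (β + x g i)) / ∑ g, (N g : ℝ)
      = β + ∑ g, (∑ h, (N h : ℝ))⁻¹ * ∑ i, x g i := by
  simp only [Fin.sum_const_add]
  rw [sum_add_distrib, ← sum_mul, ← mul_sum, add_div, mul_div_cancel_left₀ β hM, div_eq_inv_mul]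

variable (a b : ℝ)

lemma sum_clusterAverage_weights (hG : G ≠ 0) (hN : ∀ g, N g ≠ 0) :
    ∑ g, ((G : ℝ)⁻¹ * (N g : ℝ)⁻¹) ^ 2 * ((a - b) * N g + b * (N g : ℝ) ^ 2)
      = (a - b) / (G : ℝ) ^ 2 * (∑ g, ((N g : ℝ))⁻¹) + b / (G : ℝ) := by
  have hsummand : ∀ g, ((G : ℝ)⁻¹ * (N g : ℝ)⁻¹) ^ 2 * ((a - b) * N g + b * (N g : ℝ) ^ 2)
      = (a - b) / (G : ℝ) ^ 2 * (N g : ℝ)⁻¹ + b / (G : ℝ) ^ 2 := by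
    intro g
    field_simp [hN g]
  rw [sum_congr rfl fun g _ ↦ hsummand g, sum_add_distrib, ← mul_sum, sum_const, card_univ,
    Fintype.card_fin, nsmul_eq_mul]
  field_simp [hG]

lemma sum_pooledOLS_weights (hM : ∑ g, (N g : ℝ) ≠ 0) :
    ∑ g, ((∑ h, (N h : ℝ))⁻¹) ^ 2 * ((a - b) * N g + b * (N g : ℝ) ^ 2)
      = (a - b) / (∑ g, (N g : ℝ)) + b * (∑ g, (N g : ℝ) ^ 2) / (∑ g, (N g : ℝ)) ^ 2 := by
  rw [← mul_sum, sum_add_distrib, ← mul_sum, ← mul_sum]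
  field_simp

end Estimators

section

variable {Ω : Type*} [MeasurableSpace Ω] {μ : Measure Ω} [IsProbabilityMeasure μ]

lemma covariance_eq_integral_mul_of_integral_eq_zero {X Y : Ω → ℝ} (hX : MemLp X 2 μ)
    (hY : MemLp Y 2 μ) (hX₀ : μ[X] = 0) : cov[X, Y; μ] = ∫ ω, X ω * Y ω ∂μ := by
  rw [covariance_eq_sub hX hY, hX₀, zero_mul, sub_zero]
  rfl

lemma variance_sum_of_equicorrelated {ι : Type*} [Fintype ι] [DecidableEq ι]
    {X : ι → Ω → ℝ} {a b : ℝ} (hX : ∀ i, MemLp (X i) 2 μ) (hmean : ∀ i, μ[X i] = 0)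
    (hcov : ∀ i j, ∫ ω, X i ω * X j ω ∂μ = if i = j then a else b) :
    Var[fun ω ↦ ∑ i, X i ω; μ]
      = (a - b) * Fintype.card ι + b * (Fintype.card ι : ℝ) ^ 2 := by
  simp only [variance_fun_sum hX,
    covariance_eq_integral_mul_of_integral_eq_zero (hX _) (hX _) (hmean _), hcov]
  exact sum_sum_equicorrelated a b

lemma iIndepFun.variance_const_add_sum_mul {ι : Type*} [Fintype ι] {Y : ι → Ω → ℝ}
    (hY : ∀ i, MemLp (Y i) 2 μ) (hind : iIndepFun Y μ) (c : ℝ) (w : ι → ℝ) :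
    Var[fun ω ↦ c + ∑ i, w i * Y i ω; μ] = ∑ i, w i ^ 2 * Var[Y i; μ] := by
  have hwY : ∀ i, MemLp (fun ω ↦ w i * Y i ω) 2 μ := fun i ↦ (hY i).const_mul (w i)
  have hind' : iIndepFun (fun i ω ↦ w i * Y i ω) μ :=
    hind.comp (fun i x ↦ w i * x) fun _ ↦ measurable_const.mul measurable_id
  rw [variance_const_add (memLp_finsetSum _ fun i _ ↦ hwY i).aestronglyMeasurable, ← sum_fn,
    IndepFun.variance_sum (fun i _ ↦ hwY i) fun i _ j _ hij ↦ hind'.indepFun hij]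
  simp only [variance_const_mul]

end

theorem stmt11_general {Ωs : Type*} [MeasurableSpace Ωs] (μ : Measure Ωs) [IsProbabilityMeasure μ]
    (G : ℕ) (hG : 1 ≤ G) (N : Fin G → ℕ) (hN : ∀ g, 1 ≤ N g)
    (a b : ℝ)
    (β : ℝ)
    (ε : (g : Fin G) → Ωs → (Fin (N g) → ℝ))
    (hmeas : ∀ g, Measurable (ε g))
    (hL2 : ∀ g i, Integrable (fun ω => (ε g ω i) ^ 2) μ)
    (hmean : ∀ g i, ∫ ω, ε g ω i ∂μ = 0)
    (hCov : ∀ g i j, ∫ ω, ε g ω i * ε g ω j ∂μ = if i = j then a else b)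
    (hindep : iIndepFun ε μ)
    (betaHat : Ωs → ℝ)
    (hbetaHat : ∀ ω, betaHat ω =
      (G : ℝ)⁻¹ * ∑ g, (∑ i, (β + ε g ω i)) / (N g : ℝ))
    (betaPOLS : Ωs → ℝ)
    (hbetaPOLS : ∀ ω, betaPOLS ω =
      (∑ g, ∑ i, (β + ε g ω i)) / ∑ g, (N g : ℝ)) :
    variance betaHat μ =
      (a - b) / (G : ℝ) ^ 2 * (∑ g, ((N g : ℝ))⁻¹) + b / (G : ℝ) ∧
    variance betaPOLS μ =
      (a - b) / (∑ g, (N g : ℝ)) + b * (∑ g, (N g : ℝ) ^ 2) / (∑ g, (N g : ℝ)) ^ 2 := by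
  have hG₀ : G ≠ 0 := Nat.one_le_iff_ne_zero.1 hG
  have hN₀ : ∀ g, N g ≠ 0 := fun g ↦ Nat.one_le_iff_ne_zero.1 (hN g)
  have hM₀ : ∑ g, (N g : ℝ) ≠ 0 :=
    (sum_pos (fun g _ ↦ Nat.cast_pos.2 (hN g)) (univ_nonempty_iff.2 ⟨⟨0, hG⟩⟩)).ne'
  set S : Fin G → Ωs → ℝ := fun g ω ↦ ∑ i, ε g ω i
  have hε : ∀ g i, MemLp (fun ω ↦ ε g ω i) 2 μ := fun g i ↦ (memLp_two_iff_integrable_sq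
    ((measurable_pi_apply i).comp (hmeas g)).aestronglyMeasurable).2 (hL2 g i)
  have hS : ∀ g, MemLp (S g) 2 μ := fun g ↦ memLp_finsetSum _ fun i _ ↦ hε g i
  have hSind : iIndepFun S μ :=
    hindep.comp (fun _ v ↦ ∑ i, v i) fun _ ↦ measurable_sum _ fun i _ ↦ measurable_pi_apply i
  have hSvar : ∀ g, Var[S g; μ] = (a - b) * N g + b * (N g : ℝ) ^ 2 := fun g ↦ by
    simpa using variance_sum_of_equicorrelated (hε g) (hmean g) (hCov g)
  constructor
  · rw [funext fun ω ↦ (hbetaHat ω).trans (clusterAverage_eq β (ε · ω) hG₀ hN₀),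
      iIndepFun.variance_const_add_sum_mul hS hSind]
    simp only [hSvar, sum_clusterAverage_weights a b hG₀ hN₀]
  · rw [funext fun ω ↦ (hbetaPOLS ω).trans (pooledOLS_eq β (ε · ω) hM₀),
      iIndepFun.variance_const_add_sum_mul hS hSind]
    simp only [hSvar, sum_pooledOLS_weights a b hM₀]

/-- exact variance formulas from the proof of the paper's
Result 2.  In the intercept-only model with equicorrelated within-cluster
errors, `Cov(ε_g) = (a−b)I + b𝟙𝟙ᵀ` (`0 < b < a`), the cluster-average
estimator has variance `(a−b)/G²·∑_g 1/N_g + b/G` and pooled OLS has variance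
`(a−b)/∑_g N_g + b·(∑_g N_g²)/(∑_g N_g)²`. -/
theorem stmt11 {Ωs : Type*} [MeasurableSpace Ωs] (μ : Measure Ωs) [IsProbabilityMeasure μ]
    (G : ℕ) (hG : 1 ≤ G) (N : Fin G → ℕ) (hN : ∀ g, 1 ≤ N g)
    (a b : ℝ) (hb : 0 < b) (hba : b < a)
    (β : ℝ)
    (ε : (g : Fin G) → Ωs → (Fin (N g) → ℝ))
    (hmeas : ∀ g, Measurable (ε g))
    (hL2 : ∀ g i, Integrable (fun ω => (ε g ω i) ^ 2) μ)
    (hmean : ∀ g i, ∫ ω, ε g ω i ∂μ = 0)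
    (hCov : ∀ g i j, ∫ ω, ε g ω i * ε g ω j ∂μ = if i = j then a else b)
    (hindep : iIndepFun ε μ)
    (betaHat : Ωs → ℝ)
    (hbetaHat : ∀ ω, betaHat ω =
      (G : ℝ)⁻¹ * ∑ g, (∑ i, (β + ε g ω i)) / (N g : ℝ))
    (betaPOLS : Ωs → ℝ)
    (hbetaPOLS : ∀ ω, betaPOLS ω =
      (∑ g, ∑ i, (β + ε g ω i)) / ∑ g, (N g : ℝ)) :
    variance betaHat μ =
      (a - b) / (G : ℝ) ^ 2 * (∑ g, ((N g : ℝ))⁻¹) + b / (G : ℝ) ∧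
    variance betaPOLS μ =
      (a - b) / (∑ g, (N g : ℝ)) + b * (∑ g, (N g : ℝ) ^ 2) / (∑ g, (N g : ℝ)) ^ 2 :=
  stmt11_general μ G hG N hN a b β ε hmeas hL2 hmean hCov hindep betaHat hbetaHat betaPOLS hbetaPOLS
end
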